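/- (Gradient via the adjoint equation for continuous observations.) Suppose σ is the Lebesgue measure on [0,1] (ρ_c ≡ 1, ρ_d ≡ 0), so that L(t₀,x₀,θ) = ∫₀¹ h(τ)(t₀+τ, x(t₀+τ), θ) dτ where x = ϕ(·, t₀, x₀, θ). Let g(t) = h(t)'(t₀+t, x(t₀+t), θ) and J(t) = f'(t₀+t, x(t₀+t), θ). If a : [0,1] → ℝ^{1+d+k} solves ȧ(t) = −g(t) − a₂(t)·J(t) backward from a(1) = 0, then L'(t₀,x₀,θ) = a(0). -/

import Mathlib

/-!
Write `N t = ∂φ(t)/∂ξ (ξ₀)` for the sensitivity of the flow and `g t = h(t)'(φ t ξ₀)`.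
Differentiating under the integral sign gives `L'(ξ₀) = ∫₀¹ g ∘ N`. Differentiating
`φ t ξ = ξ + ∫₀ᵗ F (φ s ξ) ds` in `ξ` gives the variational equation
`Ṅ = F'(φ t ξ₀) ∘ N`, `N 0 = id`. Along a solution of the adjoint equation
`ȧ = -g - a ∘ F'` this makes `d/dt (a ∘ N) = -g ∘ N`, so
`∫₀¹ g ∘ N = a 0 ∘ N 0 - a 1 ∘ N 1 = a 0`.
For the lifted field `F = (1, f, 0)` one has `a ∘ F' = (a ∘ midIncl) ∘ f'`, which is the
`a₂ · J` of the adjoint equation.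
-/

open Set intervalIntegral

/-- The lifted right hand side `F(s,p,θ) = (1, f(s,p,θ), 0)`. -/
def liftedF {d k : ℕ} (f : (ℝ × (Fin d → ℝ) × (Fin k → ℝ)) → (Fin d → ℝ))
    (ξ : ℝ × (Fin d → ℝ) × (Fin k → ℝ)) : ℝ × (Fin d → ℝ) × (Fin k → ℝ) :=
  ((1 : ℝ), f ξ, (0 : Fin k → ℝ))

/-- Inclusion of the middle (state) block `ℝ^d` into `S = ℝ × ℝ^d × ℝ^k`. -/
noncomputable def midIncl (d k : ℕ) :
    (Fin d → ℝ) →L[ℝ] (ℝ × (Fin d → ℝ) × (Fin k → ℝ)) :=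
  (ContinuousLinearMap.inr ℝ ℝ ((Fin d → ℝ) × (Fin k → ℝ))).comp
    (ContinuousLinearMap.inl ℝ (Fin d → ℝ) (Fin k → ℝ))

section ParametricIntegral

variable {E X : Type*} [NormedAddCommGroup E] [NormedSpace ℝ E]
  [NormedAddCommGroup X] [NormedSpace ℝ X] {G : ℝ × E → X}

theorem ContDiff.hasFDerivAt_partial_right (hG : ContDiff ℝ 1 G) (t : ℝ) (x : E) :
    HasFDerivAt (fun y => G (t, y)) ((fderiv ℝ G (t, x)).comp (ContinuousLinearMap.inr ℝ ℝ E))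
      x :=
  (hG.differentiable one_ne_zero (t, x)).hasFDerivAt.comp x (hasFDerivAt_prodMk_right t x)

theorem ContDiff.continuous_fderiv_partial_right (hG : ContDiff ℝ 1 G) :
    Continuous fun p : ℝ × E => fderiv ℝ (fun y => G (p.1, y)) p.2 := by
  simp_rw [fun p : ℝ × E => (hG.hasFDerivAt_partial_right p.1 p.2).fderiv]
  exact (hG.continuous_fderiv one_ne_zero).clm_comp continuous_const

theorem ContDiff.hasFDerivAt_intervalIntegral [ProperSpace E] (hG : ContDiff ℝ 1 G)
    (a b : ℝ) (x₀ : E) :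
    HasFDerivAt (fun x => ∫ t in a..b, G (t, x))
      (∫ t in a..b, fderiv ℝ (fun x => G (t, x)) x₀) x₀ := by
  have hG' := hG.continuous_fderiv_partial_right
  obtain ⟨C, hC⟩ :=
    (isCompact_uIcc.prod (isCompact_closedBall x₀ 1)).exists_bound_of_continuousOn
      hG'.continuousOn
  have hcont : ∀ x : E, Continuous fun t => G (t, x) := fun x =>
    hG.continuous.comp (continuous_id.prodMk continuous_const)
  refine hasFDerivAt_integral_of_dominated_of_fderiv_le (μ := MeasureTheory.volume)
    (F' := fun x t => fderiv ℝ (fun y => G (t, y)) x) (bound := fun _ => C)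
    (Metric.ball_mem_nhds x₀ one_pos) (.of_forall fun x => (hcont x).aestronglyMeasurable)
    ((hcont x₀).intervalIntegrable a b)
    (hG'.comp (continuous_id.prodMk continuous_const)).aestronglyMeasurable ?_
    intervalIntegrable_const (.of_forall fun t _ x _ => ?_)
  · refine .of_forall fun t ht x hx => hC (t, x) ⟨uIoc_subset_uIcc ht, ?_⟩
    exact Metric.ball_subset_closedBall hx
  · exact (hG.hasFDerivAt_partial_right t x).differentiableAt.hasFDerivAt

end ParametricIntegral

section Adjoint

variable {E X : Type*} [NormedAddCommGroup E] [NormedSpace ℝ E]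
  [NormedAddCommGroup X] [NormedSpace ℝ X] [CompleteSpace X]

theorem integral_comp_eq_of_adjoint {a : ℝ → E →L[ℝ] X} {g : ℝ → E →L[ℝ] X}
    {N B : ℝ → E →L[ℝ] E} {t₀ t₁ : ℝ} (ht : t₀ ≤ t₁)
    (ha : ContinuousOn a (Icc t₀ t₁)) (hg : ContinuousOn g (Icc t₀ t₁))
    (hN : ContinuousOn N (Icc t₀ t₁))
    (ha' : ∀ t ∈ Ioo t₀ t₁, HasDerivAt a (-g t - (a t).comp (B t)) t)
    (hN' : ∀ t ∈ Ioo t₀ t₁, HasDerivAt N ((B t).comp (N t)) t) :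
    ∫ t in t₀..t₁, (g t).comp (N t) = (a t₀).comp (N t₀) - (a t₁).comp (N t₁) := by
  have hderiv : ∀ t ∈ Ioo t₀ t₁,
      HasDerivAt (fun s => (a s).comp (N s)) (-(g t).comp (N t)) t := by
    intro t ht'
    convert (ha' t ht').clm_comp (hN' t ht') using 1
    simp only [ContinuousLinearMap.sub_comp, ContinuousLinearMap.neg_comp,
      ContinuousLinearMap.comp_assoc]
    abel
  have hftc := integral_eq_sub_of_hasDerivAt_of_le ht (ha.clm_comp hN) hderiv
    ((hg.clm_comp hN).neg.intervalIntegrable_of_Icc ht)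
  rw [integral_neg] at hftc
  rw [← neg_sub, ← hftc, neg_neg]

end Adjoint

section Flow

variable {E X : Type*} [NormedAddCommGroup E] [NormedSpace ℝ E] [ProperSpace E]
  [NormedAddCommGroup X] [NormedSpace ℝ X]
  {F : E → E} {φ : ℝ → E → E}

theorem flow_eq_add_integral (hF : Continuous F) (hφ0 : φ 0 = id)
    (hflow : ∀ t ξ, HasDerivAt (fun u => φ u ξ) (F (φ t ξ)) t) (t : ℝ) (ξ : E) :
    φ t ξ = ξ + ∫ s in (0 : ℝ)..t, F (φ s ξ) := by
  have hcont : Continuous fun s => F (φ s ξ) :=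
    hF.comp (continuous_iff_continuousAt.2 fun s => (hflow s ξ).continuousAt)
  rw [integral_eq_sub_of_hasDerivAt (fun s _ => hflow s ξ) (hcont.intervalIntegrable 0 t), hφ0,
    id_eq, add_sub_cancel]

theorem hasDerivAt_fderiv_flow (hF : ContDiff ℝ 1 F) (hφ0 : φ 0 = id)
    (hflow : ∀ t ξ, HasDerivAt (fun u => φ u ξ) (F (φ t ξ)) t)
    (hφ : ContDiff ℝ 1 fun p : ℝ × E => φ p.1 p.2) (ξ : E) (t : ℝ) :
    HasDerivAt (fun s => fderiv ℝ (φ s) ξ)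
      ((fderiv ℝ F (φ t ξ)).comp (fderiv ℝ (φ t) ξ)) t := by
  have hFφ : ContDiff ℝ 1 fun p : ℝ × E => F (φ p.1 p.2) := hF.comp hφ
  have hchain : ∀ s, fderiv ℝ (fun ζ => F (φ s ζ)) ξ =
      (fderiv ℝ F (φ s ξ)).comp (fderiv ℝ (φ s) ξ) :=
    fun s => fderiv_comp ξ (hF.differentiable one_ne_zero _)
      (hφ.hasFDerivAt_partial_right s ξ).differentiableAt
  have hψ : Continuous fun s => fderiv ℝ (fun ζ => F (φ s ζ)) ξ :=
    hFφ.continuous_fderiv_partial_right.comp (continuous_id.prodMk continuous_const)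
  have hN (s : ℝ) : fderiv ℝ (φ s) ξ = ContinuousLinearMap.id ℝ E +
      ∫ r in (0 : ℝ)..s, fderiv ℝ (fun ζ => F (φ r ζ)) ξ := by
    rw [funext (flow_eq_add_integral hF.continuous hφ0 hflow s)]
    exact ((hasFDerivAt_id ξ).add (hFφ.hasFDerivAt_intervalIntegral 0 s ξ)).fderiv
  rw [← hchain t, funext hN]
  exact ((hψ.integral_hasStrictDerivAt 0 t).hasDerivAt).const_add _

theorem hasFDerivAt_integral_comp_flow {h : ℝ → E → X}
    (hφ : ContDiff ℝ 1 fun p : ℝ × E => φ p.1 p.2)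
    (hh : ContDiff ℝ 1 fun p : ℝ × E => h p.1 p.2) (a b : ℝ) (ξ : E) :
    HasFDerivAt (fun ζ => ∫ τ in a..b, h τ (φ τ ζ))
      (∫ τ in a..b, (fderiv ℝ (h τ) (φ τ ξ)).comp (fderiv ℝ (φ τ) ξ)) ξ := by
  have hchain : ∀ τ, fderiv ℝ (fun ζ => h τ (φ τ ζ)) ξ =
      (fderiv ℝ (h τ) (φ τ ξ)).comp (fderiv ℝ (φ τ) ξ) :=
    fun τ => fderiv_comp ξ (hh.hasFDerivAt_partial_right τ _).differentiableAt
      (hφ.hasFDerivAt_partial_right τ ξ).differentiableAt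
  simp_rw [← hchain]
  exact (hh.comp (contDiff_fst.prodMk hφ)).hasFDerivAt_intervalIntegral a b ξ

theorem fderiv_integral_comp_flow_eq_adjoint [CompleteSpace X] (hF : ContDiff ℝ 1 F)
    (hφ0 : φ 0 = id)
    (hflow : ∀ t ξ, HasDerivAt (fun u => φ u ξ) (F (φ t ξ)) t)
    (hφ : ContDiff ℝ 1 fun p : ℝ × E => φ p.1 p.2) {h : ℝ → E → X}
    (hh : ContDiff ℝ 1 fun p : ℝ × E => h p.1 p.2) (ξ₀ : E) {a : ℝ → E →L[ℝ] X}
    (hode : ∀ t ∈ Ioo (0 : ℝ) 1,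
      HasDerivAt a (-(fderiv ℝ (h t) (φ t ξ₀)) - (a t).comp (fderiv ℝ F (φ t ξ₀))) t)
    (hcont : ContinuousOn a (Icc 0 1)) (hterm : a 1 = 0) :
    fderiv ℝ (fun ζ => ∫ τ in (0 : ℝ)..1, h τ (φ τ ζ)) ξ₀ = a 0 := by
  have hN : Continuous fun t => fderiv ℝ (φ t) ξ₀ :=
    hφ.continuous_fderiv_partial_right.comp (continuous_id.prodMk continuous_const)
  have hg : Continuous fun t => fderiv ℝ (h t) (φ t ξ₀) :=
    hh.continuous_fderiv_partial_right.comp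
      (continuous_id.prodMk (hφ.continuous.comp (continuous_id.prodMk continuous_const)))
  have hN0 : fderiv ℝ (φ 0) ξ₀ = ContinuousLinearMap.id ℝ E := by rw [hφ0, fderiv_id]
  rw [(hasFDerivAt_integral_comp_flow hφ hh 0 1 ξ₀).fderiv,
    integral_comp_eq_of_adjoint zero_le_one hcont hg.continuousOn hN.continuousOn hode
      fun t _ => hasDerivAt_fderiv_flow hF hφ0 hflow hφ ξ₀ t, hN0, hterm]
  simp

end Flow

section Lifted

variable {d k : ℕ} {f : (ℝ × (Fin d → ℝ) × (Fin k → ℝ)) → (Fin d → ℝ)}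

theorem contDiff_liftedF {n : WithTop ℕ∞} (hf : ContDiff ℝ n f) :
    ContDiff ℝ n (liftedF f) :=
  contDiff_const.prodMk (hf.prodMk contDiff_const)

theorem fderiv_liftedF {ξ : ℝ × (Fin d → ℝ) × (Fin k → ℝ)}
    (hf : DifferentiableAt ℝ f ξ) :
    fderiv ℝ (liftedF f) ξ = (midIncl d k).comp (fderiv ℝ f ξ) := by
  have hlift : liftedF f = fun ξ => (1, 0, 0) + midIncl d k (f ξ) := by
    ext ξ <;> simp [liftedF, midIncl]
  rw [hlift, fderiv_const_add]
  exact ((midIncl d k).hasFDerivAt.comp ξ hf.hasFDerivAt).fderiv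

end Lifted

theorem gradient_continuous_observations_general
    (d k : ℕ)
    (f : (ℝ × (Fin d → ℝ) × (Fin k → ℝ)) → (Fin d → ℝ)) (hf : ContDiff ℝ 1 f)
    (φ : ℝ → (ℝ × (Fin d → ℝ) × (Fin k → ℝ)) → (ℝ × (Fin d → ℝ) × (Fin k → ℝ)))
    (h : ℝ → (ℝ × (Fin d → ℝ) × (Fin k → ℝ)) → ℝ)
    -- φ is the lifted flow of f
    (hφ0 : φ 0 = id)
    (hflow : ∀ (t : ℝ) ξ, HasDerivAt (fun u => φ u ξ) (liftedF f (φ t ξ)) t)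
    -- joint regularity, enough to differentiate the loss under the integral sign
    (hφsmooth : ContDiff ℝ 1 (fun p : ℝ × (ℝ × (Fin d → ℝ) × (Fin k → ℝ)) => φ p.1 p.2))
    (hhsmooth : ContDiff ℝ 1 (fun p : ℝ × (ℝ × (Fin d → ℝ) × (Fin k → ℝ)) => h p.1 p.2))
    -- the base point and the adjoint variable
    (ξ₀ : ℝ × (Fin d → ℝ) × (Fin k → ℝ))
    (a : ℝ → ((ℝ × (Fin d → ℝ) × (Fin k → ℝ)) →L[ℝ] ℝ))
    -- a solves ȧ(t) = −g(t) − a₂(t)·J(t) on (0,1), backward from a(1) = 0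
    (hode : ∀ t ∈ Set.Ioo (0:ℝ) 1,
      HasDerivAt a
        (-(fderiv ℝ (h t) (φ t ξ₀))
          - ((a t).comp (midIncl d k)).comp (fderiv ℝ f (φ t ξ₀))) t)
    (hcont : ContinuousOn a (Set.Icc 0 1))
    (hterm : a 1 = 0) :
    fderiv ℝ (fun ζ => ∫ τ in (0:ℝ)..1, h τ (φ τ ζ)) ξ₀ = a 0 := by
  refine fderiv_integral_comp_flow_eq_adjoint (contDiff_liftedF hf) hφ0 hflow hφsmooth
    hhsmooth ξ₀ (fun t ht => ?_) hcont hterm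
  rw [fderiv_liftedF (hf.differentiable one_ne_zero _), ← ContinuousLinearMap.comp_assoc]
  exact hode t ht

/-- Gradient via the adjoint equation for continuous observations:
for the loss `L(ξ) = ∫₀¹ h(τ)(φ(τ)(ξ)) dτ`, if `a` solves
`ȧ(t) = −g(t) − a₂(t)·J(t)` backward from `a(1) = 0`, where
`g(t) = h(t)'(φ(t)(ξ₀))` and `J(t) = f'(φ(t)(ξ₀))`, then `L'(ξ₀) = a(0)`. -/
theorem gradient_continuous_observations
    (d k : ℕ)
    (f : (ℝ × (Fin d → ℝ) × (Fin k → ℝ)) → (Fin d → ℝ)) (hf : ContDiff ℝ 1 f)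
    (φ : ℝ → (ℝ × (Fin d → ℝ) × (Fin k → ℝ)) → (ℝ × (Fin d → ℝ) × (Fin k → ℝ)))
    (h : ℝ → (ℝ × (Fin d → ℝ) × (Fin k → ℝ)) → ℝ)
    -- φ is the lifted flow of f
    (hφ0 : φ 0 = id)
    (hgroup : ∀ t s : ℝ, φ (t + s) = φ t ∘ φ s)
    (hflow : ∀ (t : ℝ) ξ, HasDerivAt (fun u => φ u ξ) (liftedF f (φ t ξ)) t)
    -- joint regularity, enough to differentiate the loss under the integral sign
    (hφsmooth : ContDiff ℝ 1 (fun p : ℝ × (ℝ × (Fin d → ℝ) × (Fin k → ℝ)) => φ p.1 p.2))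
    (hhsmooth : ContDiff ℝ 1 (fun p : ℝ × (ℝ × (Fin d → ℝ) × (Fin k → ℝ)) => h p.1 p.2))
    -- the base point and the adjoint variable
    (ξ₀ : ℝ × (Fin d → ℝ) × (Fin k → ℝ))
    (a : ℝ → ((ℝ × (Fin d → ℝ) × (Fin k → ℝ)) →L[ℝ] ℝ))
    -- a solves ȧ(t) = −g(t) − a₂(t)·J(t) on (0,1), backward from a(1) = 0
    (hode : ∀ t ∈ Set.Ioo (0:ℝ) 1,
      HasDerivAt a
        (-(fderiv ℝ (h t) (φ t ξ₀))
          - ((a t).comp (midIncl d k)).comp (fderiv ℝ f (φ t ξ₀))) t)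
    (hcont : ContinuousOn a (Set.Icc 0 1))
    (hterm : a 1 = 0) :
    fderiv ℝ (fun ζ => ∫ τ in (0:ℝ)..1, h τ (φ τ ζ)) ξ₀ = a 0 :=
  gradient_continuous_observations_general d k f hf φ h hφ0 hflow hφsmooth hhsmooth ξ₀ a hode hcont
    hterm
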